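/- With the coefficients a₀,...,a₁₆ of the Mossinghoff–Trudgian polynomial, define E_C(d₂, r, c) = a₀/r - a₁/(r+c) + a₁r/(r² + d₂²) - a₀(r+c)/((r+c)² + d₂²) + ((1-κ)/2)·Σ_{k=0}^{16} a_k. Then for all real c with 0 < c < 1/12.43436, one has E_C(2.318, 0.2473, c) < 0. -/

import Mathlib

/-- `κ = 1/√5`. -/
noncomputable def κ : ℝ := 1 / Real.sqrt 5

/-- The coefficients of the Mossinghoff–Trudgian polynomial `p₁₆`. -/
noncomputable def a : ℕ → ℝ
  | 0 => 1
  | 1 => 1.74126664022806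
  | 2 => 1.128282822804652
  | 3 => 0.5065272432186642
  | 4 => 0.1253566902628852
  | 5 => 2.372710620e-26
  | 6 => 2.818732841e-22
  | 7 => 0.01201214561729989
  | 8 => 0.006875849760911001
  | 9 => 2.064157910e-23
  | 10 => 6.601587090e-11
  | 11 => 0.001608306592372963
  | 12 => 0.001017994683287104
  | 13 => 6.728831293e-11
  | 14 => 3.682448595e-11
  | 15 => 2.949853019e-6
  | 16 => 0.00003713656497
  | _ => 0

/-- `𝓔_C(d₂, r, c)`. -/
noncomputable def EC (d₂ r c : ℝ) : ℝ :=
  a 0 / r - a 1 / (r + c) + a 1 * r / (r ^ 2 + d₂ ^ 2) -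
    a 0 * (r + c) / ((r + c) ^ 2 + d₂ ^ 2) +
    (1 - κ) / 2 * ∑ k ∈ Finset.range 17, a k

/-! With `x = r + c`, the value `𝓔_C(d₂, r, c)` depends on `c` only through
`-(a₁ / x + a₀ x / (x² + d₂²))`, which is strictly increasing in `x` while `a₀ x² ≤ a₁ d₂²`.
So `𝓔_C(2.318, 0.2473, ·)` is increasing on the whole interval and it suffices to evaluate it at
`c = 1/12.43436`, where it is about `-3.3 · 10⁻⁷`; the bound `√5 < 2.2360679775` determines `κ`
well within that margin. -/

lemma div_add_mul_div_sq_add_sq_lt {A B d x y : ℝ} (hA : 0 < A) (hB : 0 ≤ B) (hd : d ≠ 0)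
    (hx : 0 < x) (hxy : x < y) (hBxy : B * (x * y) ≤ A * d ^ 2) :
    A / y + B * y / (y ^ 2 + d ^ 2) < A / x + B * x / (x ^ 2 + d ^ 2) := by
  have hy : 0 < y := hx.trans hxy
  have hd2 : 0 < d ^ 2 := by positivity
  rw [div_add_div _ _ hy.ne' (by positivity), div_add_div _ _ hx.ne' (by positivity),
    div_lt_div_iff₀ (by positivity) (by positivity)]
  -- the difference of the two sides is `(y - x)` times this factor
  have hfactor : 0 < A * (x ^ 2 + d ^ 2) * (y ^ 2 + d ^ 2) + B * (x * y) * (x * y - d ^ 2) := by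
    nlinarith [mul_nonneg hB (sq_nonneg (x * y)), mul_pos hA (pow_pos (mul_pos hx hy) 2),
      mul_nonneg hA.le (mul_nonneg hd2.le (add_nonneg (sq_nonneg x) (sq_nonneg y))),
      mul_le_mul_of_nonneg_right hBxy hd2.le]
  nlinarith [mul_pos (sub_pos.2 hxy) hfactor]

theorem sum_a : ∑ k ∈ Finset.range 17, a k = 4.5229877797562500277803025385903062 := by
  simp only [Finset.sum_range_succ, Finset.sum_range_zero, a]
  norm_num

theorem one_div_lt_κ : 1 / 2.2360679775 < κ := by
  have hsqrt : Real.sqrt 5 < 2.2360679775 := by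
    rw [Real.sqrt_lt' (by norm_num)]
    norm_num
  exact one_div_lt_one_div_of_lt (by positivity) hsqrt

theorem EC_lt_EC_of_lt {d r c c' : ℝ} (hd : d ≠ 0) (hrc : 0 < r + c) (hcc' : c < c')
    (hmax : (r + c) * (r + c') ≤ a 1 * d ^ 2) : EC d r c < EC d r c' := by
  have key := div_add_mul_div_sq_add_sq_lt (A := a 1) (B := a 0) (by norm_num [a])
    (by norm_num [a]) hd hrc (by linarith : r + c < r + c') (by simpa [a] using hmax)
  unfold EC
  linarith

theorem EC_endpoint_neg : EC 2.318 0.2473 (1 / 12.43436) < 0 := by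
  have hκ := one_div_lt_κ
  rw [EC, sum_a]
  norm_num [a]
  linarith

/-- For `0 < c < 1/12.43436`, `𝓔_C(2.318, 0.2473, c) < 0`. -/
theorem EC_neg (c : ℝ) (hc : 0 < c) (hc' : c < 1 / 12.43436) :
    EC 2.318 0.2473 c < 0 :=
  (EC_lt_EC_of_lt (by norm_num) (by linarith) hc' (by norm_num [a]; linarith)).trans
    EC_endpoint_neg
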